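/- Let S = {x₁, …, xₘ} be a finite subset of a real Hilbert space H admitting a circumcenter p (p ∈ aff(S) and equidistant from all points of S). Let t = dim span{x₂ − x₁, …, xₘ − x₁}, and suppose x_{i₁}, …, x_{i_t} are elements of S such that (x_{i₁} − x₁, …, x_{i_t} − x₁) is a basis of span{x₂ − x₁, …, xₘ − x₁}. Let sequences x₁^{(k)} → x₁ and x_{iⱼ}^{(k)} → x_{iⱼ} (j = 1, …, t) in H. Then there exists N ∈ ℕ such that for all k ≥ N the points x₁^{(k)}, x_{i₁}^{(k)}, …, x_{i_t}^{(k)} are affinely independent — hence admit a unique circumcenter p_k — and p_k → p as k → ∞. -/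

import Mathlib

/-!
The circumcenter of points `v 0, …, v n` with linearly independent edges `e j = v (j+1) - v 0`
is `u +ᵥ v 0`, where `u` is the vector of `span (range e)` with `⟪e j, u⟫ = ‖e j‖² / 2`
(the perpendicular bisector conditions). The coefficients of `u` solve a linear system whose
matrix is the Gram matrix of `e`, so they depend continuously on the points as long as the Gram
determinant is nonzero, which is an open condition equivalent to linear independence.
The limit configuration `(x 0, x (idx ·))` has linearly independent edges and spans the same
affine hull as `S`, so its circumcenter is `p`; continuity then gives `q k → p`.
-/

open Filter Topology Matrix
open scoped InnerProductSpace

section GramSolve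

variable {𝕜 E ι : Type*} [RCLike 𝕜] [NormedAddCommGroup E] [InnerProductSpace 𝕜 E]

lemma continuous_gram : Continuous (gram 𝕜 : (ι → E) → Matrix ι ι 𝕜) :=
  continuous_matrix fun i j => (continuous_apply i).inner (continuous_apply j)

variable [Fintype ι] [DecidableEq ι]

/-- For linearly independent `e`, the unique vector of `span 𝕜 (range e)` whose inner products
with the `e i` are the `b i` (junk otherwise, since then `(gram 𝕜 e)⁻¹ = 0`). -/
noncomputable def gramSolve (e : ι → E) (b : ι → 𝕜) : E :=
  ∑ j, ((gram 𝕜 e)⁻¹ *ᵥ b) j • e j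

omit [DecidableEq ι] in
lemma gram_mulVec_apply (e : ι → E) (c : ι → 𝕜) (i : ι) :
    (gram 𝕜 e *ᵥ c) i = ⟪e i, ∑ j, c j • e j⟫_𝕜 := by
  simp [gram_apply, mulVec, dotProduct, inner_sum, inner_smul_right, mul_comm]

lemma inner_gramSolve {e : ι → E} (he : LinearIndependent 𝕜 e) (b : ι → 𝕜) (i : ι) :
    ⟪e i, gramSolve e b⟫_𝕜 = b i := by
  have hdet : IsUnit (gram 𝕜 e).det := (det_gram_ne_zero_iff_linearIndependent.mpr he).isUnit
  rw [gramSolve, ← gram_mulVec_apply, mulVec_mulVec, mul_nonsing_inv _ hdet, one_mulVec]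

lemma gramSolve_mem_span (e : ι → E) (b : ι → 𝕜) :
    gramSolve e b ∈ Submodule.span 𝕜 (Set.range e) :=
  Submodule.sum_mem _ fun j _ => Submodule.smul_mem _ _ (Submodule.subset_span ⟨j, rfl⟩)

lemma LinearIndependent.eventually_nhds {e : ι → E} (he : LinearIndependent 𝕜 e) :
    ∀ᶠ e' in 𝓝 e, LinearIndependent 𝕜 e' := by
  simp_rw [← det_gram_ne_zero_iff_linearIndependent (𝕜 := 𝕜)] at he ⊢
  exact continuous_gram.matrix_det.continuousAt.eventually_ne he

lemma continuousAt_gramSolve {e : ι → E} (he : LinearIndependent 𝕜 e) (b : ι → 𝕜) :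
    ContinuousAt (fun p : (ι → E) × (ι → 𝕜) => gramSolve p.1 p.2) (e, b) := by
  have hdet : (gram 𝕜 e).det ≠ 0 := det_gram_ne_zero_iff_linearIndependent.mpr he
  have hmatInv : ContinuousAt (Inv.inv : Matrix ι ι 𝕜 → Matrix ι ι 𝕜) (gram 𝕜 e) := by
    apply continuousAt_matrix_inv
    rw [Ring.inverse_eq_inv']
    exact continuousAt_inv₀ hdet
  have hinv : ContinuousAt (fun p : (ι → E) × (ι → 𝕜) => (gram 𝕜 p.1)⁻¹) (e, b) :=
    hmatInv.comp_of_eq ((continuous_gram.comp continuous_fst).continuousAt) rfl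
  have hmul : Continuous fun q : Matrix ι ι 𝕜 × (ι → 𝕜) => q.1 *ᵥ q.2 :=
    continuous_fst.matrix_mulVec continuous_snd
  have hcoef : ContinuousAt (fun p : (ι → E) × (ι → 𝕜) => (gram 𝕜 p.1)⁻¹ *ᵥ p.2) (e, b) :=
    hmul.continuousAt.comp_of_eq (hinv.prodMk continuousAt_snd) rfl
  exact tendsto_finsetSum _ fun j _ =>
    ((continuous_apply j).continuousAt.comp_of_eq hcoef rfl).smul
      ((continuous_apply j).comp continuous_fst).continuousAt

end GramSolve

section Edges

variable {k V P : Type*} [Ring k] [AddCommGroup V] [Module k V] [AddTorsor V P] {n : ℕ}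

def edgeVectors (v : Fin (n + 1) → P) : Fin n → V :=
  fun j => v j.succ -ᵥ v 0

variable (k) in
lemma vectorSpan_range_eq_span_edgeVectors (v : Fin (n + 1) → P) :
    vectorSpan k (Set.range v) = Submodule.span k (Set.range (edgeVectors v)) := by
  rw [vectorSpan_range_eq_span_range_vsub_right_ne k v 0,
    ← EquivLike.range_comp _ (finSuccAboveEquiv 0)]
  rfl

lemma affineIndependent_iff_linearIndependent_edgeVectors {v : Fin (n + 1) → P} :
    AffineIndependent k v ↔ LinearIndependent k (edgeVectors v) := by
  rw [affineIndependent_iff_linearIndependent_vsub k v 0,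
    ← linearIndependent_equiv (finSuccAboveEquiv 0)]
  rfl

lemma affineSpan_range_eq_of_span_edgeVectors_eq {m : ℕ} {v : Fin (n + 1) → P}
    {x : Fin (m + 1) → P} (h0 : x 0 = v 0)
    (h : Submodule.span k (Set.range (edgeVectors x)) =
      Submodule.span k (Set.range (edgeVectors v))) :
    affineSpan k (Set.range x) = affineSpan k (Set.range v) :=
  AffineSubspace.ext_of_direction_eq
    (by simp_rw [direction_affineSpan, vectorSpan_range_eq_span_edgeVectors, h])
    ⟨v 0, h0 ▸ mem_affineSpan k ⟨0, rfl⟩, mem_affineSpan k ⟨0, rfl⟩⟩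

end Edges

section Circumcenter

variable {V P : Type*} [NormedAddCommGroup V] [MetricSpace P] [NormedAddTorsor V P] {n : ℕ}

lemma continuous_edgeVectors : Continuous (edgeVectors : (Fin (n + 1) → P) → Fin n → V) :=
  continuous_pi fun j => (continuous_apply j.succ).vsub (continuous_apply 0)

variable [InnerProductSpace ℝ V]

lemma eq_of_mem_affineSpan_of_dist_eq {ι : Type*} {v : ι → P} {a b : P}
    (ha : a ∈ affineSpan ℝ (Set.range v)) (hb : b ∈ affineSpan ℝ (Set.range v))
    (hra : ∃ r, ∀ i, dist a (v i) = r) (hrb : ∃ r, ∀ i, dist b (v i) = r) : a = b := by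
  obtain ⟨ra, hra⟩ := hra
  obtain ⟨rb, hrb⟩ := hrb
  have horth : vectorSpan ℝ (Set.range v) ≤ (ℝ ∙ (a -ᵥ b))ᗮ := by
    rw [vectorSpan_def, Submodule.span_le]
    rintro _ ⟨_, ⟨i, rfl⟩, _, ⟨j, rfl⟩, rfl⟩
    rw [SetLike.mem_coe, Submodule.mem_orthogonal_singleton_iff_inner_right]
    refine EuclideanGeometry.inner_vsub_vsub_of_dist_eq_of_dist_eq ?_ ?_
    · rw [dist_comm, hrb, dist_comm, hrb]
    · rw [dist_comm, hra, dist_comm, hra]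
  have hmem : a -ᵥ b ∈ vectorSpan ℝ (Set.range v) :=
    direction_affineSpan ℝ (Set.range v) ▸ AffineSubspace.vsub_mem_direction ha hb
  have hself := Submodule.mem_orthogonal_singleton_iff_inner_right.mp (horth hmem)
  exact vsub_eq_zero_iff_eq.mp (inner_self_eq_zero.mp hself)

noncomputable def gramCircumcenter (v : Fin (n + 1) → P) : P :=
  gramSolve (edgeVectors v) (fun j => dist (v 0) (v j.succ) ^ 2 / 2) +ᵥ v 0

lemma gramCircumcenter_mem_affineSpan (v : Fin (n + 1) → P) :
    gramCircumcenter v ∈ affineSpan ℝ (Set.range v) := by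
  refine AffineSubspace.vadd_mem_of_mem_direction ?_ (mem_affineSpan ℝ ⟨0, rfl⟩)
  rw [direction_affineSpan, vectorSpan_range_eq_span_edgeVectors]
  exact gramSolve_mem_span _ _

lemma dist_gramCircumcenter {v : Fin (n + 1) → P} (hv : LinearIndependent ℝ (edgeVectors v))
    (i : Fin (n + 1)) : dist (gramCircumcenter v) (v i) = dist (gramCircumcenter v) (v 0) := by
  refine Fin.cases rfl (fun j => ?_) i
  symm
  rw [← AffineSubspace.mem_perpBisector_iff_dist_eq, AffineSubspace.mem_perpBisector_iff_inner_eq,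
    gramCircumcenter, vadd_vsub, real_inner_comm]
  exact inner_gramSolve hv _ j

lemma continuousAt_gramCircumcenter {v : Fin (n + 1) → P}
    (hv : LinearIndependent ℝ (edgeVectors v)) : ContinuousAt gramCircumcenter v := by
  have hb : Continuous fun u : Fin (n + 1) → P => fun j : Fin n =>
      dist (u 0) (u j.succ) ^ 2 / 2 :=
    continuous_pi fun j =>
      (((continuous_apply 0).dist (continuous_apply j.succ)).pow 2).div_const 2
  exact ((continuousAt_gramSolve hv _).comp_of_eq
    (continuous_edgeVectors.prodMk hb).continuousAt rfl).vadd (continuous_apply 0).continuousAt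

end Circumcenter

theorem circumcenter_tendsto_of_basis_subfamily_general {H : Type*} [NormedAddCommGroup H]
    [InnerProductSpace ℝ H] (m t : ℕ) (x : Fin (m + 1) → H)
    (p : H) (hp : p ∈ affineSpan ℝ (Set.range x))
    (hpr : ∃ r : ℝ, ∀ i, dist p (x i) = r)
    (idx : Fin t → Fin (m + 1))
    (hli : LinearIndependent ℝ (fun j : Fin t => x (idx j) - x 0))
    (hsp : Submodule.span ℝ (Set.range fun j : Fin t => x (idx j) - x 0) =
      Submodule.span ℝ (Set.range fun i : Fin m => x i.succ - x 0))
    (w : ℕ → Fin (t + 1) → H)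
    (hw : Tendsto w atTop (nhds (Fin.cons (x 0) (fun j => x (idx j)) : Fin (t + 1) → H))) :
    ∃ N : ℕ, ∃ q : ℕ → H,
      (∀ k ≥ N, AffineIndependent ℝ (w k) ∧
        (q k ∈ affineSpan ℝ (Set.range (w k)) ∧ ∃ r : ℝ, ∀ j, dist (q k) (w k j) = r) ∧
        ∀ c : H, c ∈ affineSpan ℝ (Set.range (w k)) →
          (∃ r : ℝ, ∀ j, dist c (w k j) = r) → c = q k) ∧
      Tendsto q atTop (nhds p) := by
  set v : Fin (t + 1) → H := Fin.cons (x 0) fun j => x (idx j)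
  have hv : LinearIndependent ℝ (edgeVectors v) := hli
  obtain ⟨N, hN⟩ := eventually_atTop.mp
    (hw.eventually (continuous_edgeVectors.continuousAt.eventually hv.eventually_nhds))
  refine ⟨N, fun k => gramCircumcenter (w k), fun k hk => ?_, ?_⟩
  · have hcirc : ∃ r, ∀ j, dist (gramCircumcenter (w k)) (w k j) = r :=
      ⟨_, dist_gramCircumcenter (hN k hk)⟩
    exact ⟨affineIndependent_iff_linearIndependent_edgeVectors.mpr (hN k hk),
      ⟨gramCircumcenter_mem_affineSpan _, hcirc⟩,
      fun c hc hrc =>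
        eq_of_mem_affineSpan_of_dist_eq hc (gramCircumcenter_mem_affineSpan _) hrc hcirc⟩
  · obtain ⟨r, hr⟩ := hpr
    have hpv : p ∈ affineSpan ℝ (Set.range v) :=
      affineSpan_range_eq_of_span_edgeVectors_eq (x := x) (v := v) rfl hsp.symm ▸ hp
    have hp_eq : p = gramCircumcenter v :=
      eq_of_mem_affineSpan_of_dist_eq hpv (gramCircumcenter_mem_affineSpan v)
        ⟨r, Fin.cases (hr 0) fun j => hr (idx j)⟩ ⟨_, dist_gramCircumcenter hv⟩
    exact hp_eq ▸ (continuousAt_gramCircumcenter hv).tendsto.comp hw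

/-- Let `S = {x 0, …, x m}` admit a circumcenter `p`, let
`x (idx 1), …, x (idx t)` be elements of `S` such that the differences
`x (idx j) − x 0` form a basis of `span{x 1 − x 0, …, x m − x 0}` (so `t` is the
dimension of that span), and let `w k` be a sequence of `(t+1)`-tuples converging to
`(x 0, x (idx 1), …, x (idx t))`.  Then for all sufficiently large `k` the points of
`w k` are affinely independent — hence admit a unique circumcenter `q k` — and
`q k → p`. -/
theorem circumcenter_tendsto_of_basis_subfamily {H : Type*} [NormedAddCommGroup H]
    [InnerProductSpace ℝ H] [CompleteSpace H] (m t : ℕ) (x : Fin (m + 1) → H)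
    (p : H) (hp : p ∈ affineSpan ℝ (Set.range x))
    (hpr : ∃ r : ℝ, ∀ i, dist p (x i) = r)
    (ht : t = Module.finrank ℝ
      (Submodule.span ℝ (Set.range fun i : Fin m => x i.succ - x 0)))
    (idx : Fin t → Fin (m + 1))
    (hli : LinearIndependent ℝ (fun j : Fin t => x (idx j) - x 0))
    (hsp : Submodule.span ℝ (Set.range fun j : Fin t => x (idx j) - x 0) =
      Submodule.span ℝ (Set.range fun i : Fin m => x i.succ - x 0))
    (w : ℕ → Fin (t + 1) → H)
    (hw : Tendsto w atTop (nhds (Fin.cons (x 0) (fun j => x (idx j)) : Fin (t + 1) → H))) :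
    ∃ N : ℕ, ∃ q : ℕ → H,
      (∀ k ≥ N, AffineIndependent ℝ (w k) ∧
        (q k ∈ affineSpan ℝ (Set.range (w k)) ∧ ∃ r : ℝ, ∀ j, dist (q k) (w k j) = r) ∧
        ∀ c : H, c ∈ affineSpan ℝ (Set.range (w k)) →
          (∃ r : ℝ, ∀ j, dist c (w k j) = r) → c = q k) ∧
      Tendsto q atTop (nhds p) :=
  circumcenter_tendsto_of_basis_subfamily_general m t x p hp hpr idx hli hsp w hw
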